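/- arXiv:1104.1326 — 8 statements merged into one kernel-verified Lean document; each statement's English description precedes it below -/
import Mathlib

section
/- Let k be a field of characteristic p > 0, let B be a commutative k-algebra that is of finite type over k, and let A be a k-subalgebra of B such that b^p ∈ A for every b ∈ B. Then A is a k-algebra of finite type, and B is a finitely generated A-module. -/
/-! Every `b ∈ B` is a root of `X ^ p - b ^ p ∈ A[X]`, so `B` is integral over `A`; being also
of finite type over `A`, it is a finite `A`-module. The Artin–Tate lemma then makes `A` of finite
type over the Noetherian ring `k`. -/

namespace Subalgebra

variable {R B : Type*} [CommRing R] [CommRing B] [Algebra R B]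

theorem isIntegral_of_forall_pow_mem (S : Subalgebra R B) {n : ℕ} (hn : 0 < n)
    (hS : ∀ b : B, b ^ n ∈ S) : Algebra.IsIntegral S B :=
  ⟨fun b => IsIntegral.of_pow hn (isIntegral_algebraMap (x := (⟨b ^ n, hS b⟩ : S)))⟩

theorem finite_of_isIntegral (S : Subalgebra R B) [Algebra.FiniteType R B]
    [Algebra.IsIntegral S B] : Module.Finite S B :=
  have : Algebra.FiniteType S B := .of_restrictScalars_finiteType R S B
  Algebra.IsIntegral.finite

theorem finiteType_of_finite [IsNoetherianRing R] (S : Subalgebra R B) [hB : Algebra.FiniteType R B]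
    [hS : Module.Finite S B] : Algebra.FiniteType R S :=
  ⟨fg_of_fg_of_fg R S B hB.out hS.fg_top Subtype.val_injective⟩

end Subalgebra

theorem subalgebra_containing_pth_powers_finiteType_and_finite_general
    (k : Type*) [Field k] (p : ℕ) (hp : 0 < p)
    (B : Type*) [CommRing B] [Algebra k B] (hB : Algebra.FiniteType k B)
    (A : Subalgebra k B) (hA : ∀ b : B, b ^ p ∈ A) :
    Algebra.FiniteType k A ∧ Module.Finite A B := by
  have : Algebra.IsIntegral A B := A.isIntegral_of_forall_pow_mem hp hA
  have : Module.Finite A B := A.finite_of_isIntegral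
  exact ⟨A.finiteType_of_finite, this⟩

/-- Let `k` be a field of characteristic `p > 0`, let `B` be a commutative
`k`-algebra of finite type over `k`, and let `A` be a `k`-subalgebra of `B` such that
`b ^ p ∈ A` for every `b ∈ B`. Then `A` is a `k`-algebra of finite type, and `B` is a
finitely generated `A`-module. -/
theorem subalgebra_containing_pth_powers_finiteType_and_finite
    (k : Type*) [Field k] (p : ℕ) (hp : 0 < p) [CharP k p]
    (B : Type*) [CommRing B] [Algebra k B] (hB : Algebra.FiniteType k B)
    (A : Subalgebra k B) (hA : ∀ b : B, b ^ p ∈ A) :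
    Algebra.FiniteType k A ∧ Module.Finite A B :=
  subalgebra_containing_pth_powers_finiteType_and_finite_general k p hp B hB A hA
end

section
/- Let k be a perfect field of characteristic p > 0, let B be an integral domain that is a k-algebra, and let A be a k-subalgebra of B such that b^p ∈ A for every b ∈ B. If A is a k-algebra of finite type, then B is a k-algebra of finite type and B is a finitely generated A-module. -/
/-!
The `p`-th power map `b ↦ b ^ p` is an injective map `B → A` (as `B` is reduced), semilinear along
the ring isomorphism `A ≃ A^p` given by Frobenius. Hence `B` is a finite `A`-module as soon as `A`
is a Noetherian `A^p`-module. This holds because `A^p` is Noetherian (an image of `A`), contains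
`k` (as `k` is perfect), so that `A` is of finite type over it, and `A` is integral over `A^p`.
-/

theorem Algebra.FiniteType.of_algebraMap_range_le {k S : Type*} [CommRing k] [CommRing S]
    [Algebra k S] [Algebra.FiniteType k S] {R : Subring S} (hR : (algebraMap k S).range ≤ R) :
    Algebra.FiniteType R S := by
  obtain ⟨s, hs⟩ := Algebra.FiniteType.out (R := k) (A := S)
  refine ⟨s, top_unique fun x _ => ?_⟩
  have hx : x ∈ Algebra.adjoin k (s : Set S) := hs ▸ trivial
  rw [Algebra.mem_adjoin_iff] at hx ⊢
  refine Subring.closure_mono (Set.union_subset_union_left _ ?_) hx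
  rintro _ ⟨c, rfl⟩
  exact ⟨⟨_, hR ⟨c, rfl⟩⟩, rfl⟩

section Frobenius

variable (p : ℕ)

theorem algebraMap_range_le_frobenius_range {k S : Type*} [CommRing k] [CommRing S] [Algebra k S]
    [ExpChar S p] (hk : Function.Surjective fun x : k => x ^ p) :
    (algebraMap k S).range ≤ (frobenius S p).range := by
  rintro _ ⟨c, rfl⟩
  obtain ⟨d, rfl⟩ := hk c
  exact ⟨algebraMap k S d, by rw [frobenius_def, map_pow]⟩

instance isIntegral_frobenius_range (S : Type*) [CommRing S] [ExpChar S p] :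
    Algebra.IsIntegral (frobenius S p).range S :=
  ⟨fun x => .of_pow (expChar_pos S p)
    (isIntegral_algebraMap (x := (⟨x ^ p, x, rfl⟩ : (frobenius S p).range)))⟩

theorem finite_frobenius_range_of_finiteType {k S : Type*} [CommRing k] [CommRing S]
    [Algebra k S] [ExpChar S p] [Algebra.FiniteType k S]
    (hk : Function.Surjective fun x : k => x ^ p) :
    Module.Finite (frobenius S p).range S :=
  have := Algebra.FiniteType.of_algebraMap_range_le (algebraMap_range_le_frobenius_range p hk)
  Algebra.IsIntegral.finite (h' := this)

theorem Subalgebra.finite_of_pow_mem {k B : Type*} [CommRing k] [CommRing B] [Algebra k B]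
    [IsReduced B] [ExpChar B p] (A : Subalgebra k B) [ExpChar A p]
    [IsNoetherian (frobenius A p).range A] (hA : ∀ b : B, b ^ p ∈ A) : Module.Finite A B := by
  let σ : A ≃+* (frobenius A p).range := RingEquiv.ofBijective (frobenius A p).rangeRestrict
    ⟨fun a a' h => Subtype.ext <| frobenius_inj B p congr(($h : B)),
      (frobenius A p).rangeRestrict_surjective⟩
  have := RingHomInvPair.of_ringEquiv σ
  have := RingHomInvPair.of_ringEquiv σ.symm
  let f : B →ₛₗ[(σ : A →+* (frobenius A p).range)] A :=
    { toFun := fun b => ⟨b ^ p, hA b⟩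
      map_add' := fun b c => Subtype.ext (add_pow_expChar b c p)
      map_smul' := fun a b => Subtype.ext (mul_pow (a : B) b p) }
  exact Module.Finite.of_injective f fun b c h => frobenius_inj B p congr(($h : B))

end Frobenius

/-- Let `k` be a perfect field of characteristic `p > 0` (i.e. the Frobenius
`x ↦ x ^ p` of `k` is surjective), let `B` be an integral domain which is a `k`-algebra,
and let `A` be a `k`-subalgebra of `B` such that `b ^ p ∈ A` for every `b ∈ B`.
If `A` is a `k`-algebra of finite type, then `B` is a `k`-algebra of finite type and
`B` is a finitely generated `A`-module. -/
theorem finiteType_of_subalgebra_containing_pth_powers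
    (k : Type*) [Field k] (p : ℕ) (hp : 0 < p) [CharP k p]
    (hperf : Function.Surjective fun x : k => x ^ p)
    (B : Type*) [CommRing B] [IsDomain B] [Algebra k B]
    (A : Subalgebra k B) (hA : ∀ b : B, b ^ p ∈ A)
    (hfin : Algebra.FiniteType k A) :
    Algebra.FiniteType k B ∧ Module.Finite A B := by
  have : NeZero p := ⟨hp.ne'⟩
  have : Fact p.Prime := CharP.char_is_prime_of_pos k p
  have : CharP B p := charP_of_injective_algebraMap' k p
  have : CharP A p := charP_of_injective_algebraMap' k p
  have : IsNoetherianRing A := Algebra.FiniteType.isNoetherianRing k A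
  have : Module.Finite (frobenius A p).range A :=
    finite_frobenius_range_of_finiteType p hperf (k := k)
  have hB : Module.Finite A B := A.finite_of_pow_mem p hA
  exact ⟨hfin.trans (Module.Finite.finiteType B), hB⟩
end

section
/- Let k be a field, ι an additive commutative group, and S a commutative k-algebra equipped with a grading 𝒜 : ι → Submodule_k S making S a graded k-algebra. Fix a positive integer m, and let S^{(m)} be the m-th Veronese subalgebra of S, i.e. the k-subalgebra whose underlying k-submodule is the sum over all γ ∈ ι of the graded pieces 𝒜(m·γ). If S is a k-algebra of finite type, then S is a finitely generated S^{(m)}-module and S^{(m)} is a k-algebra of finite type. -/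
/-!
Each homogeneous element `x ∈ 𝒜 γ` satisfies `x ^ m ∈ 𝒜 (m • γ) ⊆ S^{(m)}`, so it is a root of
the monic polynomial `X ^ m - x ^ m` over `S^{(m)}`. Every element of `S` is a finite sum of
homogeneous ones, hence `S` is integral over `S^{(m)}`; being of finite type over `k`, it is of
finite type and therefore finite over `S^{(m)}`. The Artin–Tate lemma then shows that `S^{(m)}`
is of finite type over the noetherian ring `k`.
-/

theorem Subalgebra.isIntegral_of_pow_mem {R S : Type*} [CommRing R] [CommRing S] [Algebra R S]
    {V : Subalgebra R S} {x : S} {n : ℕ} (hn : 0 < n) (hx : x ^ n ∈ V) : IsIntegral V x :=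
  IsIntegral.of_pow hn (isIntegral_algebraMap (x := (⟨x ^ n, hx⟩ : V)))

theorem DirectSum.Decomposition.isIntegral_of_forall_homogeneous {R S ι σ : Type*} [CommRing R]
    [CommRing S] [Algebra R S] [DecidableEq ι] [SetLike σ S] [AddSubmonoidClass σ S]
    (𝒜 : ι → σ) [DirectSum.Decomposition 𝒜] (h : ∀ γ, ∀ x ∈ 𝒜 γ, IsIntegral R x) :
    Algebra.IsIntegral R S := by
  classical
  refine Algebra.isIntegral_def.2 fun x => ?_
  rw [← DirectSum.sum_support_decompose 𝒜 x]
  exact IsIntegral.sum _ fun γ _ => h γ _ (DirectSum.decompose 𝒜 x γ).2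

theorem GradedAlgebra.isIntegral_of_forall_nsmul_le {k ι S : Type*} [CommRing k] [AddCommMonoid ι]
    [DecidableEq ι] [CommRing S] [Algebra k S] (𝒜 : ι → Submodule k S) [GradedAlgebra 𝒜]
    {m : ℕ} (hm : 0 < m) {V : Subalgebra k S}
    (hV : ∀ γ, 𝒜 (m • γ) ≤ Subalgebra.toSubmodule V) : Algebra.IsIntegral V S :=
  DirectSum.Decomposition.isIntegral_of_forall_homogeneous 𝒜 fun _ _ hx =>
    Subalgebra.isIntegral_of_pow_mem hm (hV _ (SetLike.pow_mem_graded m hx))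

theorem Algebra.FiniteType.of_module_finite (k V S : Type*) [CommRing k] [IsNoetherianRing k]
    [CommRing V] [CommRing S] [Algebra k V] [Algebra V S] [Algebra k S] [IsScalarTower k V S]
    [Algebra.FiniteType k S] [Module.Finite V S] (hinj : Function.Injective (algebraMap V S)) :
    Algebra.FiniteType k V :=
  ⟨fg_of_fg_of_fg k V S Algebra.FiniteType.out Module.Finite.fg_top hinj⟩

/-- Let `k` be a field, `ι` an additive commutative group, and `S` a commutative
`k`-algebra equipped with a grading `𝒜 : ι → Submodule k S` making `S` a graded `k`-algebra.
Fix a positive integer `m`, and let `V = S^{(m)}` be the `m`-th Veronese subalgebra of `S`,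
i.e. the `k`-subalgebra whose underlying `k`-submodule is the sum over all `γ ∈ ι` of the
graded pieces `𝒜 (m • γ)`. If `S` is a `k`-algebra of finite type, then `S` is a finitely
generated `S^{(m)}`-module and `S^{(m)}` is a `k`-algebra of finite type. -/
theorem veronese_subalgebra_finite_and_finiteType
    (k ι S : Type*) [Field k] [AddCommGroup ι] [DecidableEq ι]
    [CommRing S] [Algebra k S] (𝒜 : ι → Submodule k S) [GradedAlgebra 𝒜]
    (m : ℕ) (hm : 0 < m)
    (V : Subalgebra k S)
    (hV : Subalgebra.toSubmodule V = ⨆ γ : ι, 𝒜 (m • γ))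
    (hS : Algebra.FiniteType k S) :
    Module.Finite V S ∧ Algebra.FiniteType k V := by
  have : Algebra.IsIntegral V S :=
    GradedAlgebra.isIntegral_of_forall_nsmul_le 𝒜 hm fun γ => hV ▸ le_iSup (fun γ => 𝒜 (m • γ)) γ
  have : Algebra.FiniteType V S := Algebra.FiniteType.of_restrictScalars_finiteType k V S
  have hfin : Module.Finite V S := Algebra.IsIntegral.finite
  exact ⟨hfin, Algebra.FiniteType.of_module_finite k V S Subtype.val_injective⟩
end

section
/- Let E be a real vector space and let P₁, P₂, N₁, N₂ ⊆ E be convex cones. Set C₁ = P₁ + N₁ and C₂ = P₂ + N₂. Assume: (i) the sum P₂ + N₂ has unique decompositions; (ii) P₁ ∩ P₂ is a face of P₂; (iii) N₁ ∩ N₂ is a face of N₂; and (iv) C₁ ∩ C₂ = (P₁ ∩ P₂) + (N₁ ∩ N₂). Then C₁ ∩ C₂ is a face of C₂. -/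
open Pointwise

/-- A subset `C` of a real vector space is a convex cone if it is closed under addition and
under multiplication by positive real scalars. -/
def IsConvexConeSet {E : Type*} [AddCommGroup E] [Module ℝ E] (C : Set E) : Prop :=
  (∀ a ∈ C, ∀ b ∈ C, a + b ∈ C) ∧ ∀ r : ℝ, 0 < r → ∀ a ∈ C, r • a ∈ C

/-- A subset `F` of a convex cone `C` is a face of `C` if `F ⊆ C` and whenever `a, b ∈ C`
satisfy `a + b ∈ F`, then `a ∈ F` and `b ∈ F`. -/
def IsFaceOf {E : Type*} [AddCommGroup E] [Module ℝ E] (C F : Set E) : Prop :=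
  F ⊆ C ∧ ∀ a ∈ C, ∀ b ∈ C, a + b ∈ F → a ∈ F ∧ b ∈ F

/-- The sum `P + N` of two convex cones has unique decompositions if whenever
`p + n = p' + n'` with `p, p' ∈ P` and `n, n' ∈ N`, one has `p = p'` and `n = n'`. -/
def HasUniqueDecompositions {E : Type*} [AddCommGroup E] [Module ℝ E] (P N : Set E) : Prop :=
  ∀ p ∈ P, ∀ p' ∈ P, ∀ n ∈ N, ∀ n' ∈ N, p + n = p' + n' → p = p' ∧ n = n'

theorem IsFaceOf.add {E : Type*} [AddCommGroup E] [Module ℝ E] {P N F G : Set E}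
    (hP : ∀ a ∈ P, ∀ b ∈ P, a + b ∈ P) (hN : ∀ a ∈ N, ∀ b ∈ N, a + b ∈ N)
    (huniq : HasUniqueDecompositions P N) (hF : IsFaceOf P F) (hG : IsFaceOf N G) :
    IsFaceOf (P + N) (F + G) := by
  refine ⟨Set.add_subset_add hF.1 hG.1, ?_⟩
  rintro _ ⟨p, hp, n, hn, rfl⟩ _ ⟨p', hp', n', hn', rfl⟩ ⟨f, hf, g, hg, hfg⟩
  have hsplit : (p + p') + (n + n') = f + g := by simp only at hfg; rw [hfg]; abel
  obtain ⟨rfl, rfl⟩ :=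
    huniq _ (hP p hp p' hp') _ (hF.1 hf) _ (hN n hn n' hn') _ (hG.1 hg) hsplit
  obtain ⟨hpF, hp'F⟩ := hF.2 p hp p' hp' hf
  obtain ⟨hnG, hn'G⟩ := hG.2 n hn n' hn' hg
  exact ⟨Set.add_mem_add hpF hnG, Set.add_mem_add hp'F hn'G⟩

theorem inter_isFaceOf_of_join_general
    (E : Type*) [AddCommGroup E] [Module ℝ E]
    (P₁ P₂ N₁ N₂ : Set E)
    (hP₂ : IsConvexConeSet P₂)
    (hN₂ : IsConvexConeSet N₂)
    (huniq : HasUniqueDecompositions P₂ N₂)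
    (hPface : IsFaceOf P₂ (P₁ ∩ P₂))
    (hNface : IsFaceOf N₂ (N₁ ∩ N₂))
    (hinter : (P₁ + N₁) ∩ (P₂ + N₂) = (P₁ ∩ P₂) + (N₁ ∩ N₂)) :
    IsFaceOf (P₂ + N₂) ((P₁ + N₁) ∩ (P₂ + N₂)) := by
  rw [hinter]
  exact IsFaceOf.add hP₂.1 hN₂.1 huniq hPface hNface

/-- Let `E` be a real vector space and let `P₁, P₂, N₁, N₂ ⊆ E` be convex
cones. Set `C₁ = P₁ + N₁` and `C₂ = P₂ + N₂`. Assume: (i) the sum `P₂ + N₂` has unique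
decompositions; (ii) `P₁ ∩ P₂` is a face of `P₂`; (iii) `N₁ ∩ N₂` is a face of `N₂`; and
(iv) `C₁ ∩ C₂ = (P₁ ∩ P₂) + (N₁ ∩ N₂)`. Then `C₁ ∩ C₂` is a face of `C₂`. -/
theorem inter_isFaceOf_of_join
    (E : Type*) [AddCommGroup E] [Module ℝ E]
    (P₁ P₂ N₁ N₂ : Set E)
    (hP₁ : IsConvexConeSet P₁) (hP₂ : IsConvexConeSet P₂)
    (hN₁ : IsConvexConeSet N₁) (hN₂ : IsConvexConeSet N₂)
    (huniq : HasUniqueDecompositions P₂ N₂)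
    (hPface : IsFaceOf P₂ (P₁ ∩ P₂))
    (hNface : IsFaceOf N₂ (N₁ ∩ N₂))
    (hinter : (P₁ + N₁) ∩ (P₂ + N₂) = (P₁ ∩ P₂) + (N₁ ∩ N₂)) :
    IsFaceOf (P₂ + N₂) ((P₁ + N₁) ∩ (P₂ + N₂)) :=
  inter_isFaceOf_of_join_general E P₁ P₂ N₁ N₂ hP₂ hN₂ huniq hPface hNface hinter
end

section
/- Let E be a real vector space and let P, N ⊆ E be convex cones such that the sum P + N has unique decompositions. Let F be a face of P and let G be a face of N. Then F + G is a face of P + N. -/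
open Pointwise

theorem HasUniqueDecompositions.mem_and_mem_of_add_mem_add {E : Type*} [AddCommGroup E]
    [Module ℝ E] {P N F G : Set E} (huniq : HasUniqueDecompositions P N) (hFP : F ⊆ P)
    (hGN : G ⊆ N) {p n : E} (hp : p ∈ P) (hn : n ∈ N) (h : p + n ∈ F + G) :
    p ∈ F ∧ n ∈ G := by
  obtain ⟨f, hf, g, hg, hfg⟩ := h
  obtain ⟨rfl, rfl⟩ := huniq f (hFP hf) p hp g (hGN hg) n hn hfg
  exact ⟨hf, hg⟩

/-- Let `E` be a real vector space and let `P, N ⊆ E` be convex cones such that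
the sum `P + N` has unique decompositions. Let `F` be a face of `P` and let `G` be a face of
`N`. Then `F + G` is a face of `P + N`. -/
theorem join_of_faces_isFaceOf_join
    (E : Type*) [AddCommGroup E] [Module ℝ E]
    (P N : Set E) (hP : IsConvexConeSet P) (hN : IsConvexConeSet N)
    (huniq : HasUniqueDecompositions P N)
    (F G : Set E) (hF : IsFaceOf P F) (hG : IsFaceOf N G) :
    IsFaceOf (P + N) (F + G) := by
  refine ⟨Set.add_subset_add hF.1 hG.1, ?_⟩
  rintro _ ⟨p₁, hp₁, n₁, hn₁, rfl⟩ _ ⟨p₂, hp₂, n₂, hn₂, rfl⟩ hsum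
  rw [add_add_add_comm] at hsum
  obtain ⟨hpF, hnG⟩ := huniq.mem_and_mem_of_add_mem_add hF.1 hG.1
    (hP.1 p₁ hp₁ p₂ hp₂) (hN.1 n₁ hn₁ n₂ hn₂) hsum
  obtain ⟨hp₁F, hp₂F⟩ := hF.2 p₁ hp₁ p₂ hp₂ hpF
  obtain ⟨hn₁G, hn₂G⟩ := hG.2 n₁ hn₁ n₂ hn₂ hnG
  exact ⟨Set.add_mem_add hp₁F hn₁G, Set.add_mem_add hp₂F hn₂G⟩
end

section
/- Let k be a field of characteristic p > 0. In the polynomial ring k[x,y], set f = x^p·y + x·y^p and define the k-linear map δ : k[x,y] → k[x,y] by δ(g) = x^p·(∂g/∂x) − y^p·(∂g/∂y). Then the set { g ∈ k[x,y] : δ(g) = 0 } equals the k-subalgebra of k[x,y] generated by x^p, y^p and f. -/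
/-!
Let `A = k[x^p, y^p]`, the common kernel of `∂/∂x` and `∂/∂y`. The derivation
`δ = f_y ∂/∂x - f_x ∂/∂y` kills `A` and `f`, hence the algebra they generate.
Conversely, let `δ g = 0`, i.e. `x^p g_x = y^p g_y`. As `x^p` and `y^p` are coprime,
`g_x = y^p q` and `g_y = x^p q`, and the symmetry of second derivatives gives `δ q = 0`,
with `q` of smaller degree. By induction `q = ∑_{m<p} t_m f^m` with `t_m ∈ A`, so
`g₀ = ∑_{m<p-1} t_m f^(m+1) / (m+1)` has gradient `(q - t_{p-1} f^(p-1)) ∇f`. Hence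
`(g - g₀)_x = y^p t_{p-1} f^(p-1)`, and applying `(∂/∂x)^(p-1)` gives
`0 = (p-1)! y^(p^2) t_{p-1}`; so `t_{p-1} = 0` and `g - g₀ ∈ A`.
-/

open MvPolynomial Finset

namespace Derivation

variable {R A : Type*} [CommSemiring R] [CommSemiring A] [Algebra R A] (D : Derivation R A A)

theorem iterate_mul_of_apply_eq_zero {c : A} (hc : D c = 0) (n : ℕ) (a : A) :
    D^[n] (c * a) = c * D^[n] a := by
  induction n with
  | zero => rfl
  | succ n ih =>
    rw [Function.iterate_succ_apply', ih, D.leibniz, hc, smul_zero, add_zero, smul_eq_mul,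
      Function.iterate_succ_apply']

theorem iterate_pow_self {c f : A} (hc : D c = 0) (hf : D f = c) (n : ℕ) :
    D^[n] (f ^ n) = n.factorial * c ^ n := by
  induction n with
  | zero => simp
  | succ n ih =>
    have hD : D (f ^ (n + 1)) = ((n + 1) * c) * f ^ n := by
      rw [D.leibniz_pow, hf, Nat.add_sub_cancel, nsmul_eq_mul, smul_eq_mul]
      push_cast
      ring
    rw [Function.iterate_succ_apply, hD, D.iterate_mul_of_apply_eq_zero (by simp [hc]), ih,
      Nat.factorial_succ]
    push_cast
    ring

end Derivation

namespace MvPolynomial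

variable {σ R : Type*}

section CommSemiring

variable [CommSemiring R]

theorem iterate_pderiv_monomial (i : σ) (n : ℕ) (s : σ →₀ ℕ) (a : R) :
    (pderiv i)^[n] (monomial s a) =
      monomial (s - Finsupp.single i n) (a * (s i).descFactorial n) := by
  induction n with
  | zero => simp
  | succ n ih =>
    rw [Function.iterate_succ_apply', ih, pderiv_monomial, tsub_tsub, ← Finsupp.single_add,
      Nat.descFactorial_succ]
    simp only [Finsupp.coe_tsub, Pi.sub_apply, Finsupp.single_eq_same, Nat.cast_mul]
    congr 1
    ring

theorem iterate_pderiv_char (p : ℕ) [NeZero p] [CharP R p] (i : σ) (g : MvPolynomial σ R) :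
    (pderiv i)^[p] g = 0 := by
  induction g using MvPolynomial.induction_on' with
  | monomial s a =>
    have hdvd : p ∣ (s i).descFactorial p :=
      (Nat.dvd_factorial (Nat.pos_of_neZero p) le_rfl).trans (Nat.factorial_dvd_descFactorial _ _)
    rw [iterate_pderiv_monomial, (CharP.cast_eq_zero_iff R p _).2 hdvd, mul_zero, monomial_zero]
  | add f g hf hg => rw [iterate_map_add, hf, hg, add_zero]

theorem totalDegree_pderiv_lt {i : σ} {g : MvPolynomial σ R} (h : pderiv i g ≠ 0) :
    (pderiv i g).totalDegree < g.totalDegree := by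
  classical
  obtain ⟨m, hm, hdeg⟩ := Finset.exists_mem_eq_sup _ (support_nonempty.2 h)
    (fun s => s.sum fun _ e => e)
  have hcoeff : coeff (m + Finsupp.single i 1) g ≠ 0 := by
    rw [mem_support_iff, coeff_pderiv] at hm
    exact left_ne_zero_of_mul hm
  have hle := le_totalDegree (mem_support_iff.2 hcoeff)
  rw [Finsupp.sum_add_index' (by simp) (by simp)] at hle
  rw [totalDegree, hdeg]
  simpa using hle

end CommSemiring

section CommRing

variable [CommRing R]

theorem pderiv_pderiv_comm (i j : σ) (g : MvPolynomial σ R) :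
    pderiv i (pderiv j g) = pderiv j (pderiv i g) := by
  classical
  have h : ⁅pderiv i, pderiv j⁆ = (0 : Derivation R (MvPolynomial σ R) (MvPolynomial σ R)) :=
    derivation_ext fun l => by
      rw [Derivation.commutator_apply]
      simp [pderiv_X, Pi.single_apply, apply_ite]
  have hg := congr($h g)
  rwa [Derivation.commutator_apply, Derivation.zero_apply, sub_eq_zero] at hg

theorem totalDegree_lt_of_pderiv_eq_mul [IsDomain R] {i : σ} {g a q : MvPolynomial σ R}
    (h : pderiv i g = a * q) (ha : a ≠ 0) (hq : q ≠ 0) : q.totalDegree < g.totalDegree :=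
  calc q.totalDegree ≤ a.totalDegree + q.totalDegree := Nat.le_add_left _ _
    _ = (pderiv i g).totalDegree := by rw [h, totalDegree_mul_of_isDomain ha hq]
    _ < g.totalDegree := totalDegree_pderiv_lt (h ▸ mul_ne_zero ha hq)

noncomputable def hamiltonian (h : MvPolynomial (Fin 2) R) :
    Derivation R (MvPolynomial (Fin 2) R) (MvPolynomial (Fin 2) R) :=
  pderiv 1 h • pderiv 0 - pderiv 0 h • pderiv 1

theorem hamiltonian_apply (h g : MvPolynomial (Fin 2) R) :
    hamiltonian h g = pderiv 1 h * pderiv 0 g - pderiv 0 h * pderiv 1 g :=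
  rfl

theorem hamiltonian_self (h : MvPolynomial (Fin 2) R) : hamiltonian h h = 0 := by
  rw [hamiltonian_apply, mul_comm, sub_self]

variable {p : ℕ} [CharP R p]

theorem pderiv_pow_char (i : σ) (g : MvPolynomial σ R) : pderiv i (g ^ p) = 0 := by
  rw [pderiv_pow, CharP.cast_eq_zero, zero_mul, zero_mul]

theorem pderiv_pow_char_mul (i : σ) (f g : MvPolynomial σ R) :
    pderiv i (f ^ p * g) = f ^ p * pderiv i g := by
  rw [pderiv_mul, pderiv_pow_char, zero_mul, zero_add]

theorem hamiltonian_eq_zero_of_mem_adjoin {h g : MvPolynomial (Fin 2) R}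
    (hg : g ∈ Algebra.adjoin R {X 0 ^ p, X 1 ^ p, h}) : hamiltonian h g = 0 := by
  refine Derivation.eqOn_adjoin (D2 := 0) ?_ hg
  rintro _ (rfl | rfl | rfl)
  · simp [hamiltonian_apply]
  · simp [hamiltonian_apply]
  · exact hamiltonian_self _

theorem dvd_of_mem_support_of_pderiv_eq_zero [NoZeroDivisors R] {i : σ} {g : MvPolynomial σ R}
    (hg : pderiv i g = 0) {m : σ →₀ ℕ} (hm : m ∈ g.support) : p ∣ m i := by
  classical
  obtain hmi | hmi := eq_or_ne (m i) 0
  · rw [hmi]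
    exact dvd_zero p
  have hm' : m - Finsupp.single i 1 + Finsupp.single i 1 = m :=
    tsub_add_cancel_of_le (Finsupp.single_le_iff.2 (Nat.one_le_iff_ne_zero.2 hmi))
  have hcoeff := coeff_pderiv (i := i) g (m - Finsupp.single i 1)
  rw [hg, coeff_zero, hm'] at hcoeff
  have hcast : ((m - Finsupp.single i 1 : σ →₀ ℕ) i : R) + 1 = m i := by
    rw [← congr($hm' i)]
    simp
  rw [← CharP.cast_eq_zero_iff R p, ← hcast]
  exact (mul_eq_zero.1 hcoeff.symm).resolve_left (mem_support_iff.1 hm)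

theorem mem_adjoin_X_pow_of_pderiv_eq_zero [NoZeroDivisors R] {g : MvPolynomial σ R}
    (hg : ∀ i, pderiv i g = 0) :
    g ∈ Algebra.adjoin R (Set.range fun i => (X i : MvPolynomial σ R) ^ p) := by
  classical
  rw [g.as_sum]
  refine Subalgebra.sum_mem _ fun m hm => ?_
  rw [monomial_eq]
  refine Subalgebra.mul_mem _ (Subalgebra.algebraMap_mem _ _)
    (Subalgebra.prod_mem _ fun i _ => ?_)
  obtain ⟨e, he⟩ := dvd_of_mem_support_of_pderiv_eq_zero (hg i) hm
  simp only [he, pow_mul]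
  exact Subalgebra.pow_mem _ (Algebra.subset_adjoin (Set.mem_range_self i)) _

end CommRing

section Field

variable {k : Type*} [Field k] {p : ℕ} [CharP k p]

theorem pderiv_sum_inv_mul_pow {i : σ} {t : ℕ → MvPolynomial σ k}
    (ht : ∀ m, pderiv i (t m) = 0) (f : MvPolynomial σ k) :
    pderiv i (∑ m ∈ range (p - 1), C ((m + 1 : ℕ) : k)⁻¹ * t m * f ^ (m + 1)) =
      (∑ m ∈ range (p - 1), t m * f ^ m) * pderiv i f := by
  rw [map_sum, sum_mul]
  refine sum_congr rfl fun m hm => ?_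
  have hne : ((m + 1 : ℕ) : k) ≠ 0 := by
    rw [Ne, CharP.cast_eq_zero_iff k p]
    intro hdvd
    have := Nat.le_of_dvd m.succ_pos hdvd
    have := mem_range.1 hm
    omega
  have hunit : C ((m + 1 : ℕ) : k)⁻¹ * ((m + 1 : ℕ) : MvPolynomial σ k) = 1 := by
    rw [← map_natCast C, ← map_mul, inv_mul_cancel₀ hne, map_one]
  rw [mul_assoc, pderiv_C_mul, pderiv_mul, ht, zero_mul, zero_add, pderiv_pow,
    Nat.add_sub_cancel]
  linear_combination (t m * f ^ m * pderiv i f) * hunit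

local notation "𝔣" => (X 0 : MvPolynomial (Fin 2) k) ^ p * X 1 + X 0 * X 1 ^ p

local notation "𝔸" => Algebra.adjoin k {(X 0 : MvPolynomial (Fin 2) k) ^ p, X 1 ^ p}

theorem pderiv_zero_f : pderiv 0 𝔣 = X 1 ^ p := by
  simp

theorem pderiv_one_f : pderiv 1 𝔣 = X 0 ^ p := by
  simp

theorem hamiltonian_f_apply (g : MvPolynomial (Fin 2) k) :
    hamiltonian 𝔣 g = X 0 ^ p * pderiv 0 g - X 1 ^ p * pderiv 1 g := by
  rw [hamiltonian_apply, pderiv_zero_f, pderiv_one_f]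

theorem pderiv_eq_zero_of_mem_adjoin (i : Fin 2) {g : MvPolynomial (Fin 2) k} (hg : g ∈ 𝔸) :
    pderiv i g = 0 :=
  Derivation.eqOn_adjoin (D2 := 0) (by rintro _ (rfl | rfl) <;> exact pderiv_pow_char i _) hg

theorem mem_adjoin_of_pderiv_eq_zero {g : MvPolynomial (Fin 2) k} (h0 : pderiv 0 g = 0)
    (h1 : pderiv 1 g = 0) : g ∈ 𝔸 := by
  have hrange : Set.range (fun i : Fin 2 => (X i : MvPolynomial (Fin 2) k) ^ p) =
      {X 0 ^ p, X 1 ^ p} := by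
    ext
    simp [Fin.exists_fin_two, eq_comm]
  rw [← hrange]
  exact mem_adjoin_X_pow_of_pderiv_eq_zero (Fin.forall_fin_two.2 ⟨h0, h1⟩)

theorem exists_pderiv_eq_mul_of_hamiltonian_eq_zero {g : MvPolynomial (Fin 2) k}
    (hg : hamiltonian 𝔣 g = 0) :
    ∃ q, pderiv 0 g = X 1 ^ p * q ∧ pderiv 1 g = X 0 ^ p * q := by
  rw [hamiltonian_f_apply, sub_eq_zero] at hg
  have hrel : IsRelPrime ((X 0 : MvPolynomial (Fin 2) k) ^ p) (X 1 ^ p) :=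
    IsRelPrime.pow <| (X_prime (R := k)).irreducible.isRelPrime_iff_not_dvd.2 <| by
      rw [X_dvd_X]
      decide
  obtain ⟨q, hq⟩ := hrel.dvd_of_dvd_mul_left ⟨_, hg.symm⟩
  refine ⟨q, mul_left_cancel₀ (pow_ne_zero p (X_ne_zero 0)) ?_, hq⟩
  rw [hg, hq, mul_left_comm]

theorem hamiltonian_eq_zero_of_pderiv_eq_mul {g q : MvPolynomial (Fin 2) k}
    (h0 : pderiv 0 g = X 1 ^ p * q) (h1 : pderiv 1 g = X 0 ^ p * q) : hamiltonian 𝔣 q = 0 := by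
  have hcomm := pderiv_pderiv_comm 0 1 g
  rw [h0, h1, pderiv_pow_char_mul, pderiv_pow_char_mul] at hcomm
  rw [hamiltonian_f_apply, hcomm, sub_self]

theorem eq_zero_of_pderiv_eq_mul_f_pow [Fact p.Prime] {G T : MvPolynomial (Fin 2) k}
    (hT : pderiv 0 T = 0) (hG : pderiv 0 G = X 1 ^ p * T * 𝔣 ^ (p - 1)) : T = 0 := by
  have hp := (Fact.out : p.Prime)
  have hvanish := iterate_pderiv_char p 0 G
  rw [← Nat.sub_add_cancel hp.one_le, Function.iterate_succ_apply, hG,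
    (pderiv 0).iterate_mul_of_apply_eq_zero (by rw [pderiv_pow_char_mul, hT, mul_zero]),
    (pderiv 0).iterate_pow_self (pderiv_pow_char 0 _) pderiv_zero_f] at hvanish
  have hfact : ((p - 1).factorial : MvPolynomial (Fin 2) k) ≠ 0 := by
    rw [Ne, CharP.cast_eq_zero_iff _ p, hp.dvd_factorial]
    have := hp.pos
    omega
  simpa [hfact, X_ne_zero] using hvanish

theorem exists_eq_sum_of_pderiv_eq_mul_sum [Fact p.Prime] {g : MvPolynomial (Fin 2) k}
    {t : ℕ → MvPolynomial (Fin 2) k} (ht : ∀ m, t m ∈ 𝔸)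
    (h0 : pderiv 0 g = X 1 ^ p * ∑ m ∈ range p, t m * 𝔣 ^ m)
    (h1 : pderiv 1 g = X 0 ^ p * ∑ m ∈ range p, t m * 𝔣 ^ m) :
    ∃ s : ℕ → MvPolynomial (Fin 2) k, (∀ m, s m ∈ 𝔸) ∧
      g = ∑ m ∈ range p, s m * 𝔣 ^ m := by
  have hrange : range p = range (p - 1 + 1) := by
    rw [Nat.sub_add_cancel (Fact.out : p.Prime).one_le]
  have hconst (i : Fin 2) (m : ℕ) : pderiv i (t m) = 0 := pderiv_eq_zero_of_mem_adjoin i (ht m)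
  have hsplit : ∑ m ∈ range p, t m * 𝔣 ^ m =
      ∑ m ∈ range (p - 1), t m * 𝔣 ^ m + t (p - 1) * 𝔣 ^ (p - 1) := by
    rw [hrange, sum_range_succ]
  set g₀ := ∑ m ∈ range (p - 1), C ((m + 1 : ℕ) : k)⁻¹ * t m * 𝔣 ^ (m + 1) with hg₀
  have hG0 : pderiv 0 (g - g₀) = X 1 ^ p * t (p - 1) * 𝔣 ^ (p - 1) := by
    rw [map_sub, h0, hsplit, hg₀, pderiv_sum_inv_mul_pow (hconst 0), pderiv_zero_f]
    ring
  have hG1 : pderiv 1 (g - g₀) = X 0 ^ p * t (p - 1) * 𝔣 ^ (p - 1) := by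
    rw [map_sub, h1, hsplit, hg₀, pderiv_sum_inv_mul_pow (hconst 1), pderiv_one_f]
    ring
  have htop : t (p - 1) = 0 := eq_zero_of_pderiv_eq_mul_f_pow (hconst 0 _) hG0
  have hG : g - g₀ ∈ 𝔸 := by
    apply mem_adjoin_of_pderiv_eq_zero <;> simp [hG0, hG1, htop]
  refine ⟨fun | 0 => g - g₀ | m + 1 => C ((m + 1 : ℕ) : k)⁻¹ * t m, ?_, ?_⟩
  · rintro (_ | m)
    · exact hG
    · exact Subalgebra.mul_mem _ (Subalgebra.algebraMap_mem _ _) (ht m)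
  · rw [hrange, sum_range_succ']
    dsimp only
    rw [← hg₀]
    ring

theorem exists_eq_sum_of_hamiltonian_eq_zero [Fact p.Prime] {g : MvPolynomial (Fin 2) k}
    (hg : hamiltonian 𝔣 g = 0) :
    ∃ t : ℕ → MvPolynomial (Fin 2) k, (∀ m, t m ∈ 𝔸) ∧
      g = ∑ m ∈ range p, t m * 𝔣 ^ m := by
  induction hd : g.totalDegree using Nat.strong_induction_on generalizing g with
  | _ n ih =>
  obtain ⟨q, hq0, hq1⟩ := exists_pderiv_eq_mul_of_hamiltonian_eq_zero hg
  obtain ⟨t, ht, rfl⟩ : ∃ t : ℕ → MvPolynomial (Fin 2) k,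
      (∀ m, t m ∈ 𝔸) ∧ q = ∑ m ∈ range p, t m * 𝔣 ^ m := by
    obtain rfl | hq := eq_or_ne q 0
    · exact ⟨0, fun _ => zero_mem _, by simp⟩
    · exact ih _ (hd ▸ totalDegree_lt_of_pderiv_eq_mul hq1 (pow_ne_zero p (X_ne_zero 0)) hq)
        (hamiltonian_eq_zero_of_pderiv_eq_mul hq0 hq1) rfl
  exact exists_eq_sum_of_pderiv_eq_mul_sum ht hq0 hq1

end Field

end MvPolynomial

/-- Let `k` be a field of characteristic `p > 0`. In the polynomial ring
`k[x,y]`, set `f = x^p*y + x*y^p` and define the `k`-linear map `δ : k[x,y] → k[x,y]` by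
`δ g = x^p * (∂g/∂x) - y^p * (∂g/∂y)`. Then `{ g : δ g = 0 }` equals the `k`-subalgebra
of `k[x,y]` generated by `x^p`, `y^p` and `f`. -/
theorem kernel_of_rational_vector_field
    (k : Type*) [Field k] (p : ℕ) (hp : 0 < p) [CharP k p] :
    {g : MvPolynomial (Fin 2) k |
        (X 0 : MvPolynomial (Fin 2) k) ^ p * pderiv 0 g
          - (X 1 : MvPolynomial (Fin 2) k) ^ p * pderiv 1 g = 0} =
      (Algebra.adjoin k
        {(X 0 : MvPolynomial (Fin 2) k) ^ p, (X 1 : MvPolynomial (Fin 2) k) ^ p,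
          (X 0 : MvPolynomial (Fin 2) k) ^ p * X 1 + X 0 * (X 1 : MvPolynomial (Fin 2) k) ^ p} :
        Set (MvPolynomial (Fin 2) k)) := by
  have : NeZero p := ⟨hp.ne'⟩
  have := CharP.char_is_prime_of_pos k p
  ext g
  rw [Set.mem_ofPred_eq, ← hamiltonian_f_apply, SetLike.mem_coe]
  refine ⟨fun hg => ?_, hamiltonian_eq_zero_of_mem_adjoin⟩
  obtain ⟨t, ht, rfl⟩ := exists_eq_sum_of_hamiltonian_eq_zero hg
  refine Subalgebra.sum_mem _ fun m _ => Subalgebra.mul_mem _ ?_ ?_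
  · exact Algebra.adjoin_mono (by simp [Set.insert_subset_iff]) (ht m)
  · exact Subalgebra.pow_mem _ (Algebra.subset_adjoin (by simp)) _
end

section
/- Let k be a field of characteristic p > 0. The kernel of the k-algebra homomorphism k[X,Y,Z] → k[x,y] determined by X ↦ x^p, Y ↦ y^p, Z ↦ x^p·y + x·y^p is the principal ideal generated by Z^p − X^p·Y − X·Y^p. -/
/-!
Write `A = k[x,y]` and `w = x^p y + x y^p`. Renaming `Z` as `T` identifies `k[X,Y,Z]` with `A[T]`,
and the map becomes evaluation at `T = w` with coefficients sent through `expand p`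
(`x ↦ x^p`, `y ↦ y^p`). In characteristic `p` we have `expand p w = w^p`, so the monic `T^p - w`
lies in the kernel, and it generates it once no nonzero polynomial of degree `< p` does. The
derivation `∂/∂y` kills the image of `expand p` and sends `w` to `x^p ≠ 0`, so `r ↦ r'` preserves
the kernel and lowers degrees; a kernel element of degree `< p` with `r' = 0` is a constant, and
`expand p` is injective.
-/

open MvPolynomial

namespace Polynomial

section

variable {R A S : Type*} [CommRing R] [CommRing A] [CommRing S] [Algebra S A]
  (D : Derivation S A A) {f : R →+* A} (hDf : ∀ a, D (f a) = 0) (w : A)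

include hDf in
theorem _root_.Derivation.map_eval₂ (q : R[X]) :
    D (q.eval₂ f w) = q.derivative.eval₂ f w * D w := by
  induction q using Polynomial.induction_on' with
  | add q r hq hr => simp only [eval₂_add, map_add, hq, hr, add_mul]
  | monomial n a =>
    simp only [eval₂_monomial, derivative_monomial, D.leibniz, D.leibniz_pow, hDf, smul_eq_mul,
      nsmul_eq_mul, mul_zero, add_zero, map_mul, map_natCast]
    ring

end

variable {R A : Type*} [CommRing R] [CommRing A]

theorem ker_eval₂RingHom_eq_span_of_monic {f : R →+* A} {w : A} {g : R[X]} (hg : g.Monic)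
    (hgw : g.eval₂ f w = 0)
    (hmin : ∀ r : R[X], r.natDegree < g.natDegree → r.eval₂ f w = 0 → r = 0) :
    RingHom.ker (eval₂RingHom f w) = Ideal.span {g} := by
  nontriviality R
  refine le_antisymm (fun q hq => ?_) ((Ideal.span_singleton_le_iff_mem _).mpr hgw)
  by_cases hg1 : g = 1
  · simp [hg1]
  have hrem : (q %ₘ g).eval₂ f w = 0 := by
    rw [modByMonic_eq_sub_mul_div, eval₂_sub, eval₂_mul, hgw, zero_mul, sub_zero]
    exact hq
  exact Ideal.mem_span_singleton.mpr <|
    (modByMonic_eq_zero_iff_dvd hg).mp (hmin _ (natDegree_modByMonic_lt q hg hg1) hrem)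

variable {S : Type*} [CommRing S] [Algebra S A] [NoZeroDivisors R] [NoZeroDivisors A]
  {p : ℕ} [CharP R p] (D : Derivation S A A) {f : R →+* A} (hf : Function.Injective f)
  (hDf : ∀ a, D (f a) = 0) {w : A} (hDw : D w ≠ 0)

include hf hDf hDw in
theorem eq_zero_of_eval₂_eq_zero_of_natDegree_lt {r : R[X]} (hr : r.natDegree < p)
    (hrw : r.eval₂ f w = 0) : r = 0 := by
  induction hn : r.natDegree using Nat.strong_induction_on generalizing r with
  | _ n ih =>
  obtain ⟨c, rfl⟩ : ∃ c, C c = r := by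
    refine natDegree_eq_zero.mp (by_contra fun hne => hne ?_)
    have hder : r.derivative = 0 :=
      ih _ (hn ▸ natDegree_derivative_lt hne) ((natDegree_derivative_le r).trans_lt (by omega))
        (by simpa [hDw, hrw] using (D.map_eval₂ hDf w r).symm) rfl
    have hdeg := natDegree_expand p (contract p r)
    rw [expand_contract p hder (by omega)] at hdeg
    exact Nat.eq_zero_of_dvd_of_lt (hdeg ▸ dvd_mul_left _ _) hr
  rw [eval₂_C] at hrw
  rw [(map_eq_zero_iff f hf).mp hrw, C_0]

variable [Nontrivial R]

include hf hDf hDw in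
theorem ker_eval₂RingHom_eq_span_X_pow_sub_C (hp : 0 < p) {c : R} (hc : f c = w ^ p) :
    RingHom.ker (eval₂RingHom f w) = Ideal.span {X ^ p - C c} :=
  ker_eval₂RingHom_eq_span_of_monic (monic_X_pow_sub_C c hp.ne') (by simp [hc]) fun _ hr =>
    eq_zero_of_eval₂_eq_zero_of_natDegree_lt D hf hDf hDw (by rwa [natDegree_X_pow_sub_C] at hr)

end Polynomial

namespace MvPolynomial

variable {σ R M : Type*} [CommRing R] [AddCommGroup M] [Module (MvPolynomial σ R) M] [Module R M]

theorem derivation_expand_eq_zero (p : ℕ) [CharP R p] (D : Derivation R (MvPolynomial σ R) M)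
    (a : MvPolynomial σ R) : D (expand p a) = 0 := by
  induction a using MvPolynomial.induction_on with
  | C a => rw [expand_C, ← algebraMap_eq, D.map_algebraMap]
  | add a b ha hb => rw [map_add, map_add, ha, hb, add_zero]
  | mul_X a i ha =>
    rw [map_mul, expand_X, D.leibniz, D.leibniz_pow, ha, smul_zero, add_zero,
      ← Nat.cast_smul_eq_nsmul (MvPolynomial σ R), CharP.cast_eq_zero, zero_smul, smul_zero]

section

variable (R : Type*) [CommSemiring R] (n : ℕ)

noncomputable def finSuccLastEquiv :
    MvPolynomial (Fin (n + 1)) R ≃ₐ[R] Polynomial (MvPolynomial (Fin n) R) :=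
  (renameEquiv R finSuccEquivLast).trans (optionEquivLeft R (Fin n))

variable {R n}

@[simp]
theorem finSuccLastEquiv_X_castSucc (i : Fin n) :
    finSuccLastEquiv R n (X i.castSucc) = Polynomial.C (X i) := by
  simp [finSuccLastEquiv, optionEquivLeft_X_some]

@[simp]
theorem finSuccLastEquiv_X_last : finSuccLastEquiv R n (X (Fin.last n)) = Polynomial.X := by
  simp [finSuccLastEquiv, optionEquivLeft_X_none]

theorem aeval_eq_eval₂_finSuccLastEquiv {S : Type*} [CommSemiring S] [Algebra R S]
    (v : Fin (n + 1) → S) (f : MvPolynomial (Fin (n + 1)) R) :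
    aeval v f = (finSuccLastEquiv R n f).eval₂
      (aeval fun i : Fin n => v i.castSucc).toRingHom (v (Fin.last n)) := by
  induction f using MvPolynomial.induction_on with
  | C a => rw [← algebraMap_eq, AlgEquiv.commutes]; simp
  | add f g hf hg => simp [hf, hg]
  | mul_X f i hf => induction i using Fin.lastCases <;> simp [hf]

end

end MvPolynomial

section

variable {k : Type*} [Field k] {p : ℕ} [CharP k p]

theorem expand_X_pow_mul_X_add_X_mul_X_pow (hp : 0 < p) :
    expand p ((X 0 : MvPolynomial (Fin 2) k) ^ p * X 1 + X 0 * X 1 ^ p) =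
      (X 0 ^ p * X 1 + X 0 * X 1 ^ p) ^ p := by
  have := Fact.mk ((CharP.char_is_prime_or_zero k p).resolve_right hp.ne')
  simp [add_pow_char, mul_pow, ← pow_mul]

theorem pderiv_one_X_pow_mul_X_add_X_mul_X_pow :
    pderiv 1 ((X 0 : MvPolynomial (Fin 2) k) ^ p * X 1 + X 0 * X 1 ^ p) = X 0 ^ p := by
  simp [pderiv_X]

end

/-- Let `k` be a field of characteristic `p > 0`. The kernel of the
`k`-algebra homomorphism `k[X,Y,Z] → k[x,y]` determined by `X ↦ x^p`, `Y ↦ y^p`,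
`Z ↦ x^p*y + x*y^p` is the principal ideal generated by `Z^p - X^p*Y - X*Y^p`. -/
theorem ker_aeval_eq_span
    (k : Type*) [Field k] (p : ℕ) (hp : 0 < p) [CharP k p] :
    RingHom.ker (MvPolynomial.aeval
        ![(X 0 : MvPolynomial (Fin 2) k) ^ p, (X 1 : MvPolynomial (Fin 2) k) ^ p,
          (X 0 : MvPolynomial (Fin 2) k) ^ p * X 1
            + X 0 * (X 1 : MvPolynomial (Fin 2) k) ^ p] :
      MvPolynomial (Fin 3) k →ₐ[k] MvPolynomial (Fin 2) k) =
    Ideal.span {(X 2 : MvPolynomial (Fin 3) k) ^ p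
      - (X 0 : MvPolynomial (Fin 3) k) ^ p * X 1
      - X 0 * (X 1 : MvPolynomial (Fin 3) k) ^ p} := by
  set w : MvPolynomial (Fin 2) k := X 0 ^ p * X 1 + X 0 * X 1 ^ p
  set E := finSuccLastEquiv k 2
  have hcoeff : (aeval fun i : Fin 2 => ![X 0 ^ p, X 1 ^ p, w] i.castSucc) = expand p := by
    ext i; fin_cases i <;> simp
  have hE : E (X 2 ^ p - X 0 ^ p * X 1 - X 0 * X 1 ^ p) = .X ^ p - .C w := by
    have h0 : E (X 0) = .C (X 0) := finSuccLastEquiv_X_castSucc 0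
    have h1 : E (X 1) = .C (X 1) := finSuccLastEquiv_X_castSucc 1
    have h2 : E (X 2) = .X := finSuccLastEquiv_X_last
    simp only [map_sub, map_mul, map_pow, map_add, h0, h1, h2, w]
    ring
  have hker := Polynomial.ker_eval₂RingHom_eq_span_X_pow_sub_C (pderiv 1)
    (expand_injective hp) (derivation_expand_eq_zero p (pderiv (R := k) (1 : Fin 2)))
    (by rw [pderiv_one_X_pow_mul_X_add_X_mul_X_pow]; exact pow_ne_zero _ (X_ne_zero 0)) hp
    (expand_X_pow_mul_X_add_X_mul_X_pow hp)
  ext f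
  rw [RingHom.mem_ker, Ideal.mem_span_singleton, ← map_dvd_iff E, hE,
    ← Ideal.mem_span_singleton, ← hker, RingHom.mem_ker, aeval_eq_eval₂_finSuccLastEquiv, hcoeff]
  rfl
end

section
/- Let k be a field of characteristic p > 0. The polynomial Z^p − X^p·Y − X·Y^p generates a prime ideal in the polynomial ring k[X,Y,Z]; equivalently, Z^p − X^p·Y − X·Y^p is a prime element of k[X,Y,Z]. -/
/-!
Over `k[X, Y]`, the polynomial `Z ^ p - (X ^ p * Y + X * Y ^ p)` in `Z` is Eisenstein at the
prime `X`: the constant term `X * (X ^ (p - 1) * Y + Y ^ p)` is divisible by `X` exactly once as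
soon as `p ≥ 2`, which holds because `p` is the characteristic of a field. Eisenstein polynomials
are irreducible, and irreducibles are prime in the factorial ring `k[X, Y][Z]`.
-/

open MvPolynomial

namespace Polynomial

variable {R : Type*} [CommRing R]

theorem isEisensteinAt_X_pow_sub_C [Nontrivial R] {P : Ideal R} (hP : P ≠ ⊤) {c : R}
    (hc : c ∈ P) (hc2 : c ∉ P ^ 2) {n : ℕ} (hn : n ≠ 0) : (X ^ n - C c).IsEisensteinAt P where
  leading := by
    rwa [(monic_X_pow_sub_C c hn).leadingCoeff, ← Ideal.eq_top_iff_one]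
  mem {m} hm := by
    rw [natDegree_X_pow_sub_C] at hm
    rcases eq_or_ne m 0 with rfl | hm0
    · simpa [hn.symm] using hc
    · simp [coeff_X_pow, coeff_C, hm.ne, hm0]
  notMem := by simpa [hn.symm] using hc2

theorem irreducible_X_pow_sub_C_of_prime_dvd [IsDomain R] {q c : R} (hq : Prime q)
    (hqc : q ∣ c) (hqc2 : ¬ q ^ 2 ∣ c) {n : ℕ} (hn : n ≠ 0) : Irreducible (X ^ n - C c) := by
  have hP : (Ideal.span {q}).IsPrime := (Ideal.span_singleton_prime hq.ne_zero).mpr hq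
  have hE := isEisensteinAt_X_pow_sub_C hP.ne_top (Ideal.mem_span_singleton.mpr hqc)
    (by rwa [Ideal.span_singleton_pow, Ideal.mem_span_singleton]) hn
  exact hE.irreducible hP (monic_X_pow_sub_C c hn).isPrimitive
    (by rw [natDegree_X_pow_sub_C]; exact Nat.pos_of_ne_zero hn)

end Polynomial

namespace MvPolynomial

variable {σ R : Type*} [CommRing R] [IsDomain R]

theorem X_sq_not_dvd_X_pow_mul_X_add_X_mul_X_pow {i j : σ} (hij : i ≠ j) {p : ℕ} (hp : 2 ≤ p) :
    ¬ (X i : MvPolynomial σ R) ^ 2 ∣ X i ^ p * X j + X i * X j ^ p := by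
  have hfactor : (X i : MvPolynomial σ R) ^ p * X j + X i * X j ^ p
      = X i * (X i ^ (p - 1) * X j + X j ^ p) := by
    rw [mul_add, ← mul_assoc, ← pow_succ', Nat.sub_add_cancel (by omega)]
  rw [hfactor, sq, mul_dvd_mul_iff_left (X_ne_zero i),
    dvd_add_right (dvd_mul_of_dvd_left (dvd_pow_self _ (by omega)) _)]
  exact fun h ↦ hij (X_dvd_X.mp (X_prime.dvd_of_dvd_pow h))

end MvPolynomial

/-- Let `k` be a field of characteristic `p > 0`. The polynomial
`Z^p - X^p*Y - X*Y^p` is a prime element of the polynomial ring `k[X,Y,Z]`; equivalently,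
it generates a prime ideal. -/
theorem prime_Zp_sub_XpY_sub_XYp
    (k : Type*) [Field k] (p : ℕ) (hp : 0 < p) [CharP k p] :
    Prime ((X 2 : MvPolynomial (Fin 3) k) ^ p
      - (X 0 : MvPolynomial (Fin 3) k) ^ p * X 1
      - X 0 * (X 1 : MvPolynomial (Fin 3) k) ^ p) := by
  have hp2 : 2 ≤ p := by have := CharP.char_ne_one k p; omega
  let e := (renameEquiv k finSuccEquivLast).trans (optionEquivLeft k (Fin 2))
  have hC (i : Fin 2) : e (X i.castSucc) = Polynomial.C (X i) := by simp [e]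
  have hZ : e (X 2) = Polynomial.X := by
    simp only [e, AlgEquiv.trans_apply, renameEquiv_apply, rename_X]
    exact optionEquivLeft_X_none k (Fin 2)
  have himg : e ((X 2 : MvPolynomial (Fin 3) k) ^ p - X 0 ^ p * X 1 - X 0 * X 1 ^ p)
      = Polynomial.X ^ p - Polynomial.C (X 0 ^ p * X 1 + X 0 * X 1 ^ p) := by
    rw [map_sub, map_sub, map_mul, map_mul, map_pow, map_pow, map_pow, hZ,
      show e (X 0) = _ from hC 0, show e (X 1) = _ from hC 1]
    simp only [← Polynomial.C_pow, ← Polynomial.C_mul, sub_sub, ← Polynomial.C_add]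
  rw [← MulEquiv.prime_iff e.toMulEquiv]
  change Prime (e _)
  rw [himg]
  refine (Polynomial.irreducible_X_pow_sub_C_of_prime_dvd X_prime ?_
    (X_sq_not_dvd_X_pow_mul_X_add_X_mul_X_pow (by decide) hp2) hp.ne').prime
  exact dvd_add (dvd_mul_of_dvd_left (dvd_pow_self _ hp.ne') _) (dvd_mul_right _ _)
end
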